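/- Let 𝔐_1 and 𝔐_2 be matroids on [m] with a common fixed linear order, such that every independent set of 𝔐_2 is independent in 𝔐_1. Then for each i, the number of i-element subsets of [m] that are independent in 𝔐_1 and contain no broken circuit of 𝔐_1 is at least the number of i-element subsets independent in 𝔐_2 containing no broken circuit of 𝔐_2. Equivalently (via the NBC theorem), the signless Whitney numbers of the first kind satisfy |w_i(𝔐_1)| ≥ |w_i(𝔐_2)|. -/

import Mathlib

/-- A circuit of a matroid: a minimal dependent set (given here as a finite set, for a
matroid whose ground set is the whole type). -/
def IsCircuitOf {α : Type*} (M : Matroid α) (C : Finset α) : Prop :=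
  ¬ M.Indep ↑C ∧ ∀ D : Finset α, D ⊂ C → M.Indep ↑D

/-- A broken circuit: a circuit with its maximal element (in the fixed linear order)
removed. -/
def IsBrokenCircuitOf {α : Type*} [LinearOrder α] (M : Matroid α) (B : Finset α) : Prop :=
  ∃ (C : Finset α) (hC : C.Nonempty), IsCircuitOf M C ∧ B = C.erase (C.max' hC)

/-- An NBC set of size `i`: an `i`-element independent set containing no broken circuit.
By Whitney's NBC theorem, the number of such sets is `|wᵢ(𝔐)|`. -/
def NBCSets {α : Type*} [LinearOrder α] (M : Matroid α) (i : ℕ) : Set (Finset α) :=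
  {S | S.card = i ∧ M.Indep ↑S ∧ ∀ B : Finset α, IsBrokenCircuitOf M B → ¬ B ⊆ S}

/-! Every NBC set of `M₂` is an NBC set of `M₁`: a circuit `C` of `M₁` is dependent in `M₂`,
so it contains a circuit `C'` of `M₂`, and removing maxima is monotone, so the broken circuit
of `C'` lies inside that of `C`. -/

theorem Finset.erase_max'_subset_erase_max' {α : Type*} [LinearOrder α] {s t : Finset α}
    (hs : s.Nonempty) (ht : t.Nonempty) (hst : s ⊆ t) :
    s.erase (s.max' hs) ⊆ t.erase (t.max' ht) := by
  intro x hx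
  obtain ⟨hx_ne, hx_mem⟩ := Finset.mem_erase.mp hx
  have hx_lt : x < t.max' ht :=
    ((s.le_max' x hx_mem).lt_of_ne hx_ne).trans_le (Finset.max'_subset hs hst)
  exact Finset.mem_erase.mpr ⟨hx_lt.ne, hst hx_mem⟩

theorem IsCircuitOf.nonempty {α : Type*} {M : Matroid α} {C : Finset α}
    (hC : IsCircuitOf M C) : C.Nonempty := by
  rw [Finset.nonempty_iff_ne_empty]
  rintro rfl
  exact hC.1 (by simp)

theorem exists_isCircuitOf_subset {α : Type*} {M : Matroid α} {C : Finset α}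
    (hC : ¬ M.Indep ↑C) : ∃ C' ⊆ C, IsCircuitOf M C' := by
  obtain ⟨C', hC'C, hmin⟩ :=
    exists_minimal_le_of_wellFoundedLT (fun D : Finset α => ¬ M.Indep ↑D) C hC
  exact ⟨C', hC'C, hmin.prop, fun D hD => not_not.mp (hmin.not_prop_of_lt hD)⟩

theorem IsBrokenCircuitOf.exists_subset_of_indep_imp {α : Type*} [LinearOrder α]
    {M₁ M₂ : Matroid α} (hind : ∀ S : Set α, M₂.Indep S → M₁.Indep S) {B : Finset α}
    (hB : IsBrokenCircuitOf M₁ B) : ∃ B' ⊆ B, IsBrokenCircuitOf M₂ B' := by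
  obtain ⟨C, hC, hC_circuit, rfl⟩ := hB
  obtain ⟨C', hC'C, hC'_circuit⟩ :=
    exists_isCircuitOf_subset (M := M₂) fun h => hC_circuit.1 (hind _ h)
  exact ⟨_, Finset.erase_max'_subset_erase_max' hC'_circuit.nonempty hC hC'C,
    C', hC'_circuit.nonempty, hC'_circuit, rfl⟩

theorem NBCSets_subset_of_indep_imp {α : Type*} [LinearOrder α] {M₁ M₂ : Matroid α}
    (hind : ∀ S : Set α, M₂.Indep S → M₁.Indep S) (i : ℕ) :
    NBCSets M₂ i ⊆ NBCSets M₁ i := by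
  rintro S ⟨hcard, hS_indep, hS_nbc⟩
  refine ⟨hcard, hind _ hS_indep, fun B hB hBS => ?_⟩
  obtain ⟨B', hB'B, hB'⟩ := hB.exists_subset_of_indep_imp hind
  exact hS_nbc B' hB' (hB'B.trans hBS)

theorem stmt15_general {m : ℕ} (M₁ M₂ : Matroid (Fin m))
    (hind : ∀ S : Set (Fin m), M₂.Indep S → M₁.Indep S) (i : ℕ) :
    (NBCSets M₂ i).ncard ≤ (NBCSets M₁ i).ncard :=
  Set.ncard_le_ncard (NBCSets_subset_of_indep_imp hind i) (Set.toFinite _)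

/-- If every independent set of `𝔐₂` is independent in `𝔐₁`, then for each
`i` the number of NBC `i`-sets of `𝔐₁` is at least that of `𝔐₂`, i.e.
`|wᵢ(𝔐₁)| ≥ |wᵢ(𝔐₂)|`. -/
theorem stmt15 {m : ℕ} (M₁ M₂ : Matroid (Fin m))
    (hE₁ : M₁.E = Set.univ) (hE₂ : M₂.E = Set.univ)
    (hind : ∀ S : Set (Fin m), M₂.Indep S → M₁.Indep S) (i : ℕ) :
    (NBCSets M₂ i).ncard ≤ (NBCSets M₁ i).ncard :=
  stmt15_general M₁ M₂ hind i
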